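/- Suppose Λ(x) is positive definite and let s := −g(x). If t ∈ ℝ^U satisfies ‖t − s‖*_x ≤ 1, then Λ(H(x)⁻¹·t) is positive semidefinite (i.e., x is a dual certificate of t). -/

import Mathlib

open Matrix

/-- The gradient of the barrier `f(x) = -log det Λ(x)`:
`g(x)_i = -tr(Λ(x)⁻¹ · Λ(e_i))` (with the total matrix inverse, `0` for singular matrices). -/
noncomputable def grad {U L : ℕ} (Lam : (Fin U → ℝ) →ₗ[ℝ] Matrix (Fin L) (Fin L) ℝ)
    (x : Fin U → ℝ) : Fin U → ℝ :=
  fun i => -((Lam x)⁻¹ * Lam (Pi.single i 1)).trace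

/-- The Hessian of the barrier: `H(x)_{ij} = tr(Λ(x)⁻¹ Λ(e_i) Λ(x)⁻¹ Λ(e_j))`. -/
noncomputable def hess {U L : ℕ} (Lam : (Fin U → ℝ) →ₗ[ℝ] Matrix (Fin L) (Fin L) ℝ)
    (x : Fin U → ℝ) : Matrix (Fin U) (Fin U) ℝ :=
  Matrix.of fun i j =>
    ((Lam x)⁻¹ * Lam (Pi.single i 1) * (Lam x)⁻¹ * Lam (Pi.single j 1)).trace

/-- The local norm `‖v‖_x = (vᵀ H(x) v)^{1/2}`. -/
noncomputable def locNorm {U L : ℕ} (Lam : (Fin U → ℝ) →ₗ[ℝ] Matrix (Fin L) (Fin L) ℝ)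
    (x v : Fin U → ℝ) : ℝ :=
  Real.sqrt (v ⬝ᵥ (hess Lam x).mulVec v)

/-- The dual local norm `‖t‖*_x = (tᵀ H(x)⁻¹ t)^{1/2}`. -/
noncomputable def dualNorm {U L : ℕ} (Lam : (Fin U → ℝ) →ₗ[ℝ] Matrix (Fin L) (Fin L) ℝ)
    (x t : Fin U → ℝ) : ℝ :=
  Real.sqrt (t ⬝ᵥ (hess Lam x)⁻¹.mulVec t)

/-!
Since `-log det` is logarithmically homogeneous, `H(x) x = -g(x) = s`. Hence `u := H(x)⁻¹ t - x`
satisfies `H(x) u = t - s`, so `‖u‖_x = ‖t - s‖*_x ≤ 1`: the point `H(x)⁻¹ t` lies in the Dikin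
ellipsoid at `x`. Writing `Λ(x) = Rᴴ R` and `M := R⁻ᴴ Λ(u) R⁻¹`, we get `‖u‖_x² = tr(M²)`, so
the Frobenius norm of `M` is at most one and `Λ(x + u) = Rᴴ (1 + M) R ⪰ 0`.
-/

namespace Matrix

variable {n : Type*} [Fintype n]

lemma sq_dotProduct_mulVec_le (N : Matrix n n ℝ) (z : n → ℝ) :
    (z ⬝ᵥ N *ᵥ z) ^ 2 ≤ (z ⬝ᵥ z) ^ 2 * ∑ i, ∑ j, N i j ^ 2 := by
  have hzNz : z ⬝ᵥ N *ᵥ z = ∑ i, ∑ j, z i * z j * N i j := by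
    simp only [dotProduct, mulVec, Finset.mul_sum]
    exact Finset.sum_congr rfl fun i _ => Finset.sum_congr rfl fun j _ => by ring
  have hzz : (z ⬝ᵥ z) ^ 2 = ∑ i, ∑ j, (z i * z j) ^ 2 := by
    rw [sq, dotProduct, Finset.sum_mul_sum]
    exact Finset.sum_congr rfl fun i _ => Finset.sum_congr rfl fun j _ => by ring
  rw [hzNz, hzz]
  simpa only [Fintype.sum_prod_type] using Finset.sum_mul_sq_le_sq_mul_sq Finset.univ
    (fun p : n × n => z p.1 * z p.2) (fun p => N p.1 p.2)

lemma IsHermitian.trace_mul_self {N : Matrix n n ℝ} (hN : N.IsHermitian) :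
    (N * N).trace = ∑ i, ∑ j, N i j ^ 2 := by
  simp only [trace, diag, mul_apply, sq]
  refine Finset.sum_congr rfl fun i _ => Finset.sum_congr rfl fun j _ => ?_
  rw [← hN.apply i j, star_trivial]

variable [DecidableEq n]

lemma posSemidef_one_add_of_trace_mul_self_le_one {N : Matrix n n ℝ} (hN : N.IsHermitian)
    (h : (N * N).trace ≤ 1) : (1 + N).PosSemidef := by
  refine .of_dotProduct_mulVec_nonneg (isHermitian_one.add hN) fun z => ?_
  have hzz : 0 ≤ z ⬝ᵥ z := by simpa using dotProduct_star_self_nonneg z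
  have hCS := sq_dotProduct_mulVec_le N z
  rw [← hN.trace_mul_self] at hCS
  have hNN : 0 ≤ (N * N).trace := by rw [hN.trace_mul_self]; positivity
  rw [star_trivial, add_mulVec, one_mulVec, dotProduct_add]
  nlinarith [sq_nonneg (z ⬝ᵥ N *ᵥ z + z ⬝ᵥ z)]

lemma PosDef.posSemidef_add_of_trace_le_one {A N : Matrix n n ℝ} (hA : A.PosDef)
    (hN : N.IsHermitian) (h : (A⁻¹ * N * A⁻¹ * N).trace ≤ 1) : (A + N).PosSemidef := by
  obtain ⟨R, hR, rfl⟩ : ∃ R : Matrix n n ℝ, IsUnit R ∧ A = Rᴴ * R := by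
    open MatrixOrder in
    exact CStarAlgebra.isStrictlyPositive_iff_eq_star_mul_self.mp hA.isStrictlyPositive
  set S := R⁻¹
  have hSR : S * R = 1 := nonsing_inv_mul R ((isUnit_iff_isUnit_det R).mp hR)
  have hinv : (Rᴴ * R)⁻¹ = S * Sᴴ := by
    rw [mul_inv_rev, conjTranspose_nonsing_inv]
  set M := Sᴴ * N * S
  have hM : M.IsHermitian := isHermitian_conjTranspose_mul_mul S hN
  have hNM : Rᴴ * R + N = Rᴴ * (1 + M) * R := by
    simp only [M, mul_add, add_mul, mul_one, ← mul_assoc, ← conjTranspose_mul, hSR]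
    simp [mul_assoc, hSR]
  rw [hNM]
  refine (posSemidef_one_add_of_trace_mul_self_le_one hM ?_).conjTranspose_mul_mul_same R
  rw [hinv] at h
  calc (M * M).trace = (S * (Sᴴ * N * S * Sᴴ * N)).trace := by
        rw [trace_mul_comm S]; simp only [M, mul_assoc]
    _ ≤ 1 := by simpa only [mul_assoc] using h

end Matrix

section Barrier

variable {U L : ℕ} (Lam : (Fin U → ℝ) →ₗ[ℝ] Matrix (Fin L) (Fin L) ℝ) (x : Fin U → ℝ)

lemma dotProduct_hess_mulVec (v w : Fin U → ℝ) :
    v ⬝ᵥ hess Lam x *ᵥ w = ((Lam x)⁻¹ * Lam v * (Lam x)⁻¹ * Lam w).trace := by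
  conv_rhs => rw [pi_eq_sum_univ' v, pi_eq_sum_univ' w]
  simp only [map_sum, map_smul, Matrix.mul_sum, Matrix.sum_mul, Matrix.mul_smul,
    Matrix.smul_mul, trace_sum, trace_smul, smul_eq_mul]
  simp only [dotProduct, mulVec, hess, of_apply, Finset.mul_sum]
  rw [Finset.sum_comm]
  exact Finset.sum_congr rfl fun i _ => Finset.sum_congr rfl fun j _ => by ring

lemma hess_mulVec_self (hx : IsUnit (Lam x).det) : hess Lam x *ᵥ x = -grad Lam x := by
  funext i
  rw [← single_one_dotProduct i (hess Lam x *ᵥ x), dotProduct_hess_mulVec, mul_assoc _ _ (Lam x),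
    nonsing_inv_mul _ hx, mul_one]
  simp [grad]

end Barrier

theorem stmt8_general {U L : ℕ}
    (Lam : (Fin U → ℝ) →ₗ[ℝ] Matrix (Fin L) (Fin L) ℝ)
    (hsym : ∀ v, (Lam v).IsSymm)
    (x : Fin U → ℝ) (hx : (Lam x).PosDef)
    (s : Fin U → ℝ) (hs : s = -grad Lam x)
    (t : Fin U → ℝ) (ht : dualNorm Lam x (t - s) ≤ 1) :
    (Lam ((hess Lam x)⁻¹.mulVec t)).PosSemidef := by
  by_cases hH : IsUnit (hess Lam x).det
  swap
  · -- `H(x)⁻¹ = 0` for singular `H(x)`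
    simp [nonsing_inv_apply_not_isUnit _ hH, PosSemidef.zero]
  set w := (hess Lam x)⁻¹ *ᵥ t
  have hHu : hess Lam x *ᵥ (w - x) = t - s := by
    rw [mulVec_sub, mulVec_mulVec, mul_nonsing_inv _ hH, one_mulVec,
      hess_mulVec_self Lam x ((isUnit_iff_isUnit_det _).mp hx.isUnit), hs]
  have hdual : (t - s) ⬝ᵥ (hess Lam x)⁻¹ *ᵥ (t - s) = (w - x) ⬝ᵥ hess Lam x *ᵥ (w - x) := by
    rw [← hHu, mulVec_mulVec, nonsing_inv_mul _ hH, one_mulVec, dotProduct_comm]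
  rw [← add_sub_cancel x w, map_add]
  refine hx.posSemidef_add_of_trace_le_one (isHermitian_iff_isSymm.mpr (hsym _)) ?_
  rw [← dotProduct_hess_mulVec, ← hdual]
  simpa [dualNorm] using ht

/-- if `s = -g(x)` and `‖t − s‖*_x ≤ 1`, then `Λ(H(x)⁻¹t) ⪰ 0`,
i.e. `x` is a dual certificate of `t`. -/
theorem stmt8 {U L : ℕ} (hU : 0 < U) (hL : 0 < L)
    (Lam : (Fin U → ℝ) →ₗ[ℝ] Matrix (Fin L) (Fin L) ℝ)
    (hinj : Function.Injective Lam) (hsym : ∀ v, (Lam v).IsSymm)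
    (x : Fin U → ℝ) (hx : (Lam x).PosDef)
    (s : Fin U → ℝ) (hs : s = -grad Lam x)
    (t : Fin U → ℝ) (ht : dualNorm Lam x (t - s) ≤ 1) :
    (Lam ((hess Lam x)⁻¹.mulVec t)).PosSemidef :=
  stmt8_general Lam hsym x hx s hs t ht
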